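/- For every integer s ≥ 2 the following hold: (i) conv{(−1,−2),(0,−1),(1,s),(0,s−1),(−1,−1)} = conv{(0,0),(1,1)} + conv{(−1,−2),(−1,−1),(0,s−1)} (Minkowski sum); (ii) 𝒫^s := conv{(−1,−2),(0,−1),(1,s),(0,s−1),(−1,−1)} ⊂ ℝ² is a toric diagram with exactly five extreme points; and (iii) the interior of 𝒫^s contains exactly s − 1 points of ℤ². -/

import Mathlib

open Set Pointwise

noncomputable section

/-- We work in the plane `ℝ × ℝ`. -/
abbrev V : Type := ℝ × ℝ

/-- The embedding of the lattice `ℤ × ℤ` into the plane. -/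
def toR (p : ℤ × ℤ) : V := ((p.1 : ℝ), (p.2 : ℝ))

/-- The set of lattice points of the plane. -/
def latticePoints : Set V := Set.range toR

/-- A lattice polytope: the convex hull of a nonempty finite set of lattice points. -/
def IsLatticePolytope (P : Set V) : Prop :=
  ∃ S : Finset (ℤ × ℤ), S.Nonempty ∧ P = convexHull ℝ (toR '' ↑S)

/-- A toric diagram: a two-dimensional lattice polytope such that every lattice point on its
topological boundary is an extreme point. -/
def IsToricDiagram (P : Set V) : Prop :=
  IsLatticePolytope P ∧ (interior P).Nonempty ∧
    ∀ x ∈ frontier P, x ∈ latticePoints → x ∈ P.extremePoints ℝ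

/-- A lattice segment: the convex hull of two distinct lattice points. -/
def IsLatticeSegment (L : Set V) : Prop :=
  ∃ a b : ℤ × ℤ, a ≠ b ∧ L = segment ℝ (toR a) (toR b)

/-- A lattice triangle: the convex hull of three affinely independent lattice points. -/
def IsLatticeTriangle (T : Set V) : Prop :=
  ∃ a b c : ℤ × ℤ, AffineIndependent ℝ ![toR a, toR b, toR c] ∧
    T = convexHull ℝ {toR a, toR b, toR c}

/-- `E` is an edge of `P`: a maximal (nondegenerate) line segment contained in the
topological boundary of `P`. -/
def IsEdge (P E : Set V) : Prop :=
  (∃ a b : V, a ≠ b ∧ E = segment ℝ a b) ∧ E ⊆ frontier P ∧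
    ∀ F : Set V, (∃ a b : V, F = segment ℝ a b) → F ⊆ frontier P → E ⊆ F → F = E

/-- `v` is an edge vector of `P` (the difference of the endpoints of some edge of `P`). -/
def IsEdgeVector (P : Set V) (v : V) : Prop :=
  ∃ a b : V, a ≠ b ∧ IsEdge P (segment ℝ a b) ∧ v = b - a

/-- Two plane vectors are parallel when their cross product vanishes. -/
def Par (v w : V) : Prop := v.1 * w.2 = v.2 * w.1

/-- `P` admits a lattice maximal Minkowski decomposition: `P` is a Minkowski sum of at
least two lattice polytopes, each of which is a lattice segment or a lattice triangle. -/
def HasLatticeMaximalDecomposition (P : Set V) : Prop :=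
  ∃ (m : ℕ) (Ps : Fin (m + 1) → Set V), 1 ≤ m ∧
    P = ∑ k, Ps k ∧ ∀ k, IsLatticeSegment (Ps k) ∨ IsLatticeTriangle (Ps k)

/-- A convex polytope: the convex hull of a nonempty finite set of points. -/
def IsConvexPolytope (A : Set V) : Prop :=
  ∃ S : Finset V, S.Nonempty ∧ A = convexHull ℝ (↑S : Set V)

/-- `A` is a homothet `λ • P + t` (`λ > 0`) of `P`. -/
def IsHomothet (A P : Set V) : Prop :=
  ∃ (l : ℝ) (t : V), 0 < l ∧ A = (fun x => l • x + t) '' P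

/-- A (nondegenerate) line segment. -/
def IsSegmentSet (A : Set V) : Prop := ∃ a b : V, a ≠ b ∧ A = segment ℝ a b

/-- A triangle: the convex hull of three affinely independent points. -/
def IsTriangleSet (A : Set V) : Prop :=
  ∃ a b c : V, AffineIndependent ℝ ![a, b, c] ∧ A = convexHull ℝ {a, b, c}

/-- A convex polytope is Minkowski-indecomposable if in every Minkowski decomposition
into two convex polytopes, one of the summands is a point or a homothet of the polytope. -/
def MinkowskiIndecomposable (Q : Set V) : Prop :=
  ∀ A B : Set V, IsConvexPolytope A → IsConvexPolytope B → Q = A + B →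
    (∃ x, A = {x}) ∨ IsHomothet A Q ∨ (∃ x, B = {x}) ∨ IsHomothet B Q

/-- A parallelogram: a quadrilateral whose vertices `v₁ v₂ v₃ v₄` in cyclic order satisfy
`v₁ + v₃ = v₂ + v₄`. -/
def IsParallelogram (P : Set V) : Prop :=
  ∃ w : Fin 4 → V, Function.Injective w ∧ P.extremePoints ℝ = Set.range w ∧
    w 0 + w 2 = w 1 + w 3

/-- The Gauntlett–Martelli–Sparks–Waldram toric diagram `𝒴^{p,q}`. -/
def GMSW (p q : ℤ) : Set V :=
  convexHull ℝ (toR '' ({(0, 0), (1, 0), (p, p), (p - q - 1, p - q)} : Set (ℤ × ℤ)))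

/-- Cross product of lattice vectors. -/
def crossZ (u w : ℤ × ℤ) : ℤ := u.1 * w.2 - u.2 * w.1

/-- The pentagon `𝒫^s = conv{(−1,−2),(0,−1),(1,s),(0,s−1),(−1,−1)}`, the `r = 1` member of
the Cho–Futaki–Ono family. -/
def cfoPentagon (s : ℕ) : Set V :=
  convexHull ℝ {((-1 : ℝ), (-2 : ℝ)), ((0 : ℝ), (-1 : ℝ)), ((1 : ℝ), (s : ℝ)),
    ((0 : ℝ), (s : ℝ) - 1), ((-1 : ℝ), (-1 : ℝ))}


/-!
`𝒫^s` is the intersection of five half-planes with integer normals. Sliding a point `(x, y)` of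
that intersection down the diagonal by `t = max 0 (((s + 1) x - y + s - 1) / s)` lands it in the
triangle, which gives the Minkowski decomposition and the half-plane description at once. Each
vertex is exposed by the sum of the normals of its two edges. On lattice points the inequalities
force `-1 ≤ x ≤ 1`, after which only the five vertices remain on the boundary and only the points
`(0, n)`, `0 ≤ n ≤ s - 2`, in the interior.
-/

lemma convexHull_eq_add_of_subset {E : Type*} [AddCommGroup E] [Module ℝ E] {S A B : Set E}
    (hS : S ⊆ A + B) (hAB : A + B ⊆ convexHull ℝ S) :
    convexHull ℝ S = convexHull ℝ A + convexHull ℝ B := by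
  rw [← convexHull_add]
  exact (convexHull_mono hS).antisymm (convexHull_min hAB (convex_convexHull ℝ S))

lemma smul_add_smul_add_smul_mem_convexHull {E : Type*} [AddCommGroup E] [Module ℝ E]
    {a b c : E} {α β γ : ℝ} (hα : 0 ≤ α) (hβ : 0 ≤ β) (hγ : 0 ≤ γ) (h : α + β + γ = 1) :
    α • a + β • b + γ • c ∈ convexHull ℝ {a, b, c} := by
  have := (convex_convexHull ℝ ({a, b, c} : Set E)).sum_mem (t := Finset.univ)
    (w := ![α, β, γ]) (z := ![a, b, c]) (by simp [Fin.forall_fin_succ, *])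
    (by simp [Fin.sum_univ_three, h])
    fun i _ => subset_convexHull ℝ _ (by fin_cases i <;> simp)
  simpa [Fin.sum_univ_three, add_assoc] using this

lemma toR_injective : Function.Injective toR := fun p q h => by
  simp only [toR, Prod.ext_iff, Int.cast_inj] at h
  exact Prod.ext h.1 h.2

def intForm (a b : ℤ) : V →L[ℝ] ℝ :=
  (a : ℝ) • ContinuousLinearMap.fst ℝ ℝ ℝ + (b : ℝ) • ContinuousLinearMap.snd ℝ ℝ ℝ

@[simp]
lemma intForm_apply (a b : ℤ) (p : V) : intForm a b p = a * p.1 + b * p.2 := rfl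

def halfPlane (a b c : ℤ) : Set V := intForm a b ⁻¹' Iic (c : ℝ)

def openHalfPlane (a b c : ℤ) : Set V := intForm a b ⁻¹' Iio (c : ℝ)

section HalfPlane

variable {a b c : ℤ}

@[simp]
lemma mem_halfPlane {p : V} : p ∈ halfPlane a b c ↔ a * p.1 + b * p.2 ≤ c := Iff.rfl

@[simp]
lemma mem_openHalfPlane {p : V} : p ∈ openHalfPlane a b c ↔ a * p.1 + b * p.2 < c := Iff.rfl

lemma toR_mem_halfPlane {m n : ℤ} : toR (m, n) ∈ halfPlane a b c ↔ a * m + b * n ≤ c := by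
  simp only [mem_halfPlane, toR]; exact_mod_cast Iff.rfl

lemma toR_mem_openHalfPlane {m n : ℤ} : toR (m, n) ∈ openHalfPlane a b c ↔ a * m + b * n < c := by
  simp only [mem_openHalfPlane, toR]; exact_mod_cast Iff.rfl

lemma convex_halfPlane : Convex ℝ (halfPlane a b c) :=
  convex_halfSpace_le (intForm a b).isLinear c

lemma intForm_surjective (h : a ≠ 0 ∨ b ≠ 0) : Function.Surjective (intForm a b) := by
  intro t
  rcases h with ha | hb
  · exact ⟨(t / a, 0), by simp [mul_div_cancel₀, Int.cast_ne_zero.mpr ha]⟩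
  · exact ⟨(0, t / b), by simp [mul_div_cancel₀, Int.cast_ne_zero.mpr hb]⟩

lemma interior_halfPlane (h : a ≠ 0 ∨ b ≠ 0) : interior (halfPlane a b c) = openHalfPlane a b c := by
  rw [halfPlane, (intForm a b).interior_preimage (intForm_surjective h), interior_Iic]
  rfl

/-- A point on two non-parallel supporting lines of `P` is exposed by the sum of their forms. -/
lemma mem_exposedPoints_of_tight {P : Set V} {a' b' c' : ℤ} (hdet : a * b' - a' * b ≠ 0)
    (hP : P ⊆ halfPlane a b c ∩ halfPlane a' b' c') {v : V} (hv : v ∈ P)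
    (hc : a * v.1 + b * v.2 = c) (hc' : a' * v.1 + b' * v.2 = c') :
    v ∈ P.exposedPoints ℝ := by
  refine ⟨hv, intForm (a + a') (b + b'), fun y hy => ?_⟩
  obtain ⟨hy₁, hy₂⟩ := hP hy
  simp only [mem_halfPlane] at hy₁ hy₂
  simp only [intForm_apply, Int.cast_add]
  refine ⟨by linarith, fun hle => ?_⟩
  have e : a * y.1 + b * y.2 = c := by linarith
  have e' : a' * y.1 + b' * y.2 = c' := by linarith
  have hdetR : (a * b' - a' * b : ℝ) ≠ 0 := by exact_mod_cast hdet
  have h₁ : (a * b' - a' * b : ℝ) * (y.1 - v.1) = 0 := by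
    linear_combination b' * e - b * e' - b' * hc + b * hc'
  have h₂ : (a * b' - a' * b : ℝ) * (y.2 - v.2) = 0 := by
    linear_combination a * e' - a' * e - a * hc' + a' * hc
  exact Prod.ext (sub_eq_zero.mp ((mul_eq_zero.mp h₁).resolve_left hdetR))
    (sub_eq_zero.mp ((mul_eq_zero.mp h₂).resolve_left hdetR))

end HalfPlane

def cfoVertices (s : ℕ) : Set V :=
  {((-1 : ℝ), (-2 : ℝ)), ((0 : ℝ), (-1 : ℝ)), ((1 : ℝ), (s : ℝ)),
    ((0 : ℝ), (s : ℝ) - 1), ((-1 : ℝ), (-1 : ℝ))}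

def cfoLatticeVertices (s : ℕ) : Finset (ℤ × ℤ) :=
  {(-1, -2), (0, -1), (1, (s : ℤ)), (0, (s : ℤ) - 1), (-1, -1)}

def cfoTriangle (s : ℕ) : Set V :=
  convexHull ℝ {((-1 : ℝ), (-2 : ℝ)), ((-1 : ℝ), (-1 : ℝ)), ((0 : ℝ), (s : ℝ) - 1)}

/-- The half-planes are bounded by the lines through the edges `(-1,-1)(-1,-2)`, `(-1,-2)(0,-1)`,
`(1,s)(0,s-1)`, `(0,-1)(1,s)`, `(0,s-1)(-1,-1)`, in this order. -/
def pentagonH (s : ℕ) : Set V :=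
  halfPlane (-1) 0 1 ∩ halfPlane 1 (-1) 1 ∩ halfPlane (-1) 1 (s - 1) ∩
    halfPlane (s + 1) (-1) 1 ∩ halfPlane (-s) 1 (s - 1)

def openPentagonH (s : ℕ) : Set V :=
  openHalfPlane (-1) 0 1 ∩ openHalfPlane 1 (-1) 1 ∩ openHalfPlane (-1) 1 (s - 1) ∩
    openHalfPlane (s + 1) (-1) 1 ∩ openHalfPlane (-s) 1 (s - 1)

section Pentagon

variable {s : ℕ}

lemma cfoPentagon_eq_convexHull (s : ℕ) : cfoPentagon s = convexHull ℝ (cfoVertices s) := rfl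

lemma cfoVertices_eq_image (s : ℕ) : cfoVertices s = toR '' cfoLatticeVertices s := by
  simp [cfoVertices, cfoLatticeVertices, image_insert_eq, toR]

lemma zero_mem_cfoPentagon (hs : 1 ≤ s) : ((0 : ℝ), (0 : ℝ)) ∈ cfoPentagon s := by
  have hs' : (1 : ℝ) ≤ s := by exact_mod_cast hs
  refine segment_subset_convexHull (x := ((0 : ℝ), (-1 : ℝ))) (y := ((0 : ℝ), (s : ℝ) - 1))
    (by simp) (by simp) ⟨(s - 1) / s, 1 / s, div_nonneg (by linarith) (by linarith),
      by positivity, by field_simp; ring, ?_⟩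
  refine Prod.ext (by simp) ?_
  simp only [Prod.smul_mk, smul_eq_mul, Prod.snd_add]
  field_simp
  ring

lemma cfoPentagon_eq_add (hs : 1 ≤ s) :
    cfoPentagon s = segment ℝ ((0 : ℝ), (0 : ℝ)) ((1 : ℝ), (1 : ℝ)) + cfoTriangle s := by
  rw [← convexHull_pair, cfoTriangle, cfoPentagon]
  apply convexHull_eq_add_of_subset
  · intro v hv
    simp only [mem_insert_iff, mem_singleton_iff] at hv
    rw [mem_add]
    rcases hv with rfl | rfl | rfl | rfl | rfl
    · exact ⟨(0, 0), by simp, (-1, -2), by simp, by norm_num⟩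
    · exact ⟨(1, 1), by simp, (-1, -2), by simp, by norm_num⟩
    · exact ⟨(1, 1), by simp, (0, (s : ℝ) - 1), by simp, by norm_num⟩
    · exact ⟨(0, 0), by simp, (0, (s : ℝ) - 1), by simp, by norm_num⟩
    · exact ⟨(0, 0), by simp, (-1, -1), by simp, by norm_num⟩
  · rintro _ ⟨a, ha, b, hb, rfl⟩
    simp only [mem_insert_iff, mem_singleton_iff] at ha hb
    rcases ha with rfl | rfl <;> rcases hb with rfl | rfl | rfl <;> norm_num
    all_goals first
      | exact zero_mem_cfoPentagon hs
      | exact subset_convexHull ℝ _ (by simp)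

lemma interior_pentagonH (s : ℕ) : interior (pentagonH s) = openPentagonH s := by
  simp [pentagonH, openPentagonH, interior_inter, interior_halfPlane]

lemma convex_pentagonH (s : ℕ) : Convex ℝ (pentagonH s) :=
  (((convex_halfPlane.inter convex_halfPlane).inter convex_halfPlane).inter
    convex_halfPlane).inter convex_halfPlane

lemma cfoPentagon_subset_pentagonH (hs : 1 ≤ s) : cfoPentagon s ⊆ pentagonH s := by
  have hs' : (1 : ℝ) ≤ s := by exact_mod_cast hs
  refine convexHull_min ?_ (convex_pentagonH s)
  intro v hv
  simp only [mem_insert_iff, mem_singleton_iff] at hv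
  rcases hv with rfl | rfl | rfl | rfl | rfl <;>
    simp only [pentagonH, mem_inter_iff, mem_halfPlane] <;> push_cast <;>
    refine ⟨⟨⟨⟨?_, ?_⟩, ?_⟩, ?_⟩, ?_⟩ <;> linarith

lemma mem_cfoTriangle {x y : ℝ} (hx : -1 ≤ x) (hxy : (s + 1) * x - y ≤ 1 - s)
    (hyx : y - s * x ≤ s - 1) : (x, y) ∈ cfoTriangle s := by
  rw [cfoTriangle]
  convert smul_add_smul_add_smul_mem_convexHull (a := ((-1 : ℝ), (-2 : ℝ)))
    (b := ((-1 : ℝ), (-1 : ℝ))) (c := ((0 : ℝ), (s : ℝ) - 1))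
    (α := s * x - y + s - 1) (β := y - (s + 1) * x - s + 1) (γ := 1 + x)
    (by linarith) (by linarith) (by linarith) (by ring) using 1
  ext <;> simp <;> ring

lemma pentagonH_subset_add (hs : 1 ≤ s) :
    pentagonH s ⊆ segment ℝ ((0 : ℝ), (0 : ℝ)) ((1 : ℝ), (1 : ℝ)) + cfoTriangle s := by
  rintro p ⟨⟨⟨⟨h₁, h₂⟩, h₃⟩, h₄⟩, h₅⟩
  simp only [mem_halfPlane] at h₁ h₂ h₃ h₄ h₅
  push_cast at h₁ h₂ h₃ h₄ h₅
  have hs' : (1 : ℝ) ≤ s := by exact_mod_cast hs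
  obtain ⟨t, ht₀, ht₁, hx, hxy, hyx⟩ : ∃ t : ℝ, 0 ≤ t ∧ t ≤ 1 ∧ -1 ≤ p.1 - t ∧
      (s + 1) * (p.1 - t) - (p.2 - t) ≤ 1 - s ∧ (p.2 - t) - s * (p.1 - t) ≤ s - 1 := by
    rcases le_total ((s + 1) * p.1 - p.2 + s - 1) 0 with h | h
    · exact ⟨0, le_rfl, zero_le_one, by linarith, by linarith, by linarith⟩
    · have hs₀ : (0 : ℝ) < s := by linarith
      set t := ((s + 1) * p.1 - p.2 + s - 1) / s with ht
      have hst : s * t = (s + 1) * p.1 - p.2 + s - 1 := by rw [ht]; field_simp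
      have hpt : p.1 ≤ t := by rw [ht, le_div_iff₀ hs₀]; linarith
      have ht₁ : t ≤ 1 := by rw [ht, div_le_one hs₀]; linarith
      have htp : t ≤ p.1 + 1 := by rw [ht, div_le_iff₀ hs₀]; linarith
      exact ⟨t, by positivity, ht₁, by linarith, by linarith, by linarith⟩
  refine ⟨(t, t), ⟨1 - t, t, by linarith, ht₀, by ring, by ext <;> simp⟩, (p.1 - t, p.2 - t),
    mem_cfoTriangle hx hxy hyx, by ext <;> simp⟩

lemma cfoPentagon_eq_pentagonH (hs : 1 ≤ s) : cfoPentagon s = pentagonH s :=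
  (cfoPentagon_subset_pentagonH hs).antisymm <| by
    rw [cfoPentagon_eq_add hs]; exact pentagonH_subset_add hs

lemma cfoVertices_subset_exposedPoints (hs : 2 ≤ s) :
    cfoVertices s ⊆ (pentagonH s).exposedPoints ℝ := by
  have hmem : cfoVertices s ⊆ pentagonH s :=
    (subset_convexHull ℝ _).trans (cfoPentagon_subset_pentagonH (by omega))
  intro v hv
  have hvH := hmem hv
  simp only [cfoVertices, mem_insert_iff, mem_singleton_iff] at hv
  rcases hv with rfl | rfl | rfl | rfl | rfl
  · exact mem_exposedPoints_of_tight (by norm_num) (fun p hp => ⟨hp.1.1.1.1, hp.1.1.1.2⟩) hvH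
      (by norm_num) (by norm_num)
  · exact mem_exposedPoints_of_tight (by omega) (fun p hp => ⟨hp.1.1.1.2, hp.1.2⟩) hvH
      (by norm_num) (by norm_num)
  · exact mem_exposedPoints_of_tight (by omega) (fun p hp => ⟨hp.1.2, hp.1.1.2⟩) hvH
      (by push_cast; ring) (by push_cast; ring)
  · exact mem_exposedPoints_of_tight (by omega) (fun p hp => ⟨hp.1.1.2, hp.2⟩) hvH
      (by push_cast; ring) (by push_cast; ring)
  · exact mem_exposedPoints_of_tight (by norm_num) (fun p hp => ⟨hp.2, hp.1.1.1.1⟩) hvH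
      (by push_cast; ring) (by norm_num)

lemma extremePoints_cfoPentagon (hs : 2 ≤ s) :
    (cfoPentagon s).extremePoints ℝ = cfoVertices s := by
  have h := (cfoVertices_subset_exposedPoints hs).trans exposedPoints_subset_extremePoints
  rw [← cfoPentagon_eq_pentagonH (by omega)] at h
  exact extremePoints_convexHull_subset.antisymm h

lemma card_cfoLatticeVertices (hs : 1 ≤ s) : (cfoLatticeVertices s).card = 5 := by
  simp only [cfoLatticeVertices]
  repeat rw [Finset.card_insert_of_notMem (by simp <;> omega)]
  rfl

lemma mem_cfoLatticeVertices_of_frontier {m n : ℤ} (h : toR (m, n) ∈ pentagonH s)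
    (h' : toR (m, n) ∉ openPentagonH s) : (m, n) ∈ cfoLatticeVertices s := by
  simp only [pentagonH, openPentagonH, mem_inter_iff, toR_mem_halfPlane,
    toR_mem_openHalfPlane] at h h'
  have hm₀ : -1 ≤ m := by omega
  have hm₁ : m ≤ 1 := by nlinarith
  simp only [cfoLatticeVertices, Finset.mem_insert, Finset.mem_singleton, Prod.ext_iff]
  interval_cases m <;> omega

lemma eq_of_toR_mem_openPentagonH {m n : ℤ} (h : toR (m, n) ∈ openPentagonH s) :
    m = 0 ∧ 0 ≤ n ∧ n ≤ s - 2 := by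
  simp only [openPentagonH, mem_inter_iff, toR_mem_openHalfPlane] at h
  have hm₀ : -1 ≤ m := by omega
  have hm₁ : m ≤ 1 := by nlinarith
  interval_cases m <;> omega

lemma interior_cfoPentagon_inter_latticePoints (hs : 2 ≤ s) :
    interior (cfoPentagon s) ∩ latticePoints = (fun n : ℤ => toR (0, n)) '' Icc 0 (s - 2) := by
  rw [cfoPentagon_eq_pentagonH (by omega), interior_pentagonH]
  ext p
  constructor
  · rintro ⟨hp, ⟨m, n⟩, rfl⟩
    obtain ⟨rfl, hn⟩ := eq_of_toR_mem_openPentagonH hp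
    exact ⟨n, hn, rfl⟩
  · rintro ⟨n, ⟨hn₀, hn⟩, rfl⟩
    refine ⟨?_, mem_range_self _⟩
    simp only [openPentagonH, mem_inter_iff, toR_mem_openHalfPlane]
    omega

lemma isToricDiagram_cfoPentagon (hs : 2 ≤ s) : IsToricDiagram (cfoPentagon s) := by
  have hH := cfoPentagon_eq_pentagonH (by omega : 1 ≤ s)
  have hclosed : IsClosed (cfoPentagon s) := by
    rw [cfoPentagon_eq_convexHull, cfoVertices_eq_image]
    exact ((Finset.finite_toSet _).image toR).isCompact_convexHull (𝕜 := ℝ) |>.isClosed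
  have hlattice : IsLatticePolytope (cfoPentagon s) :=
    ⟨cfoLatticeVertices s, Finset.insert_nonempty _ _, by
      rw [cfoPentagon_eq_convexHull, cfoVertices_eq_image]⟩
  refine ⟨hlattice, ⟨(0, 0), ?_⟩, ?_⟩
  · have hs' : (2 : ℝ) ≤ s := by exact_mod_cast hs
    rw [hH, interior_pentagonH]
    simp only [openPentagonH, mem_inter_iff, mem_openHalfPlane]
    push_cast
    refine ⟨⟨⟨⟨?_, ?_⟩, ?_⟩, ?_⟩, ?_⟩ <;> linarith
  · rintro _ hx ⟨⟨m, n⟩, rfl⟩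
    rw [hclosed.frontier_eq, hH, interior_pentagonH] at hx
    rw [extremePoints_cfoPentagon hs, cfoVertices_eq_image]
    exact mem_image_of_mem _ (mem_cfoLatticeVertices_of_frontier hx.1 hx.2)

end Pentagon

/-- For every integer `s ≥ 2`: (i) `𝒫^s` equals the Minkowski sum of the
segment `conv{(0,0),(1,1)}` and the triangle `conv{(−1,−2),(−1,−1),(0,s−1)}`; (ii) `𝒫^s`
is a toric diagram with exactly five extreme points; (iii) the interior of `𝒫^s` contains
exactly `s − 1` lattice points. -/
theorem statement8 (s : ℕ) (hs : 2 ≤ s) :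
    cfoPentagon s = segment ℝ ((0 : ℝ), (0 : ℝ)) ((1 : ℝ), (1 : ℝ)) +
      convexHull ℝ {((-1 : ℝ), (-2 : ℝ)), ((-1 : ℝ), (-1 : ℝ)), ((0 : ℝ), (s : ℝ) - 1)} ∧
    IsToricDiagram (cfoPentagon s) ∧
    ((cfoPentagon s).extremePoints ℝ).ncard = 5 ∧
    (interior (cfoPentagon s) ∩ latticePoints).ncard = s - 1 := by
  refine ⟨cfoPentagon_eq_add (by omega), isToricDiagram_cfoPentagon hs, ?_, ?_⟩
  · rw [extremePoints_cfoPentagon hs, cfoVertices_eq_image,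
      ncard_image_of_injective _ toR_injective, ncard_coe_finset,
      card_cfoLatticeVertices (by omega)]
  · rw [interior_cfoPentagon_inter_latticePoints hs,
      ncard_image_of_injective _ (fun _ _ h => by simpa using toR_injective h),
      ← Finset.coe_Icc, ncard_coe_finset, Int.card_Icc]
    omega
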